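/- Let u ∈ L²(Ω⁺), extended by zero to ℝ². Then T_ε u → u strongly in L²(Ω_u⁺), i.e. ∫_{Ω_u⁺} |T_ε u(x,y) − u(x)|² dx dy → 0 as ε → 0. -/

import Mathlib

open MeasureTheory Set Filter Topology

noncomputable section

/-- Dot product on `ℝ × ℝ`. -/
def dot (a b : ℝ × ℝ) : ℝ := a.1 * b.1 + a.2 * b.2

/-- Hypotheses on the profile function `η`: Lipschitz, 1-periodic in the second
variable, uniformly positive. -/
structure EtaHyp (η : ℝ → ℝ → ℝ) : Prop where
  lip : ∃ K : NNReal, LipschitzWith K fun p : ℝ × ℝ => η p.1 p.2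
  per : ∀ t y, η t (y + 1) = η t y
  pos : ∃ c : ℝ, 0 < c ∧ ∀ t y, c ≤ η t y

/-- `η₋(t) = min_{y ∈ [0,1]} η(t,y)`. -/
def etaMinus (η : ℝ → ℝ → ℝ) (t : ℝ) : ℝ := sInf (η t '' Icc 0 1)

/-- `η₊(t) = max_{y ∈ [0,1]} η(t,y)`. -/
def etaPlus (η : ℝ → ℝ → ℝ) (t : ℝ) : ℝ := sSup (η t '' Icc 0 1)

/-- The fixed domain `Ω`. -/
def Omega (η : ℝ → ℝ → ℝ) : Set (ℝ × ℝ) :=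
  {x | 0 < x.1 ∧ x.1 < 1 ∧ 0 < x.2 ∧ x.2 < etaPlus η x.1}

/-- The lower part `Ω⁻`. -/
def OmegaMinus (η : ℝ → ℝ → ℝ) : Set (ℝ × ℝ) :=
  {x | 0 < x.1 ∧ x.1 < 1 ∧ 0 < x.2 ∧ x.2 < etaMinus η x.1}

/-- The upper part `Ω⁺`. -/
def OmegaPlus (η : ℝ → ℝ → ℝ) : Set (ℝ × ℝ) :=
  {x | 0 < x.1 ∧ x.1 < 1 ∧ etaMinus η x.1 < x.2 ∧ x.2 < etaPlus η x.1}

/-- The bottom boundary `Γ_b = [0,1] × {0}`. -/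
def GammaB : Set (ℝ × ℝ) := Icc (0 : ℝ) 1 ×ˢ {(0 : ℝ)}

/-- The oscillating domain `Ω_ε`. -/
def OmegaEps (η : ℝ → ℝ → ℝ) (ε : ℝ) : Set (ℝ × ℝ) :=
  {x | 0 < x.1 ∧ x.1 < 1 ∧ 0 < x.2 ∧ x.2 < η x.1 (x.1 / ε)}

/-- The periodic (oscillating) region `Ω_ε⁺`. -/
def OmegaEpsPlus (η : ℝ → ℝ → ℝ) (ε : ℝ) : Set (ℝ × ℝ) :=
  {x | 0 < x.1 ∧ x.1 < 1 ∧ etaMinus η x.1 < x.2 ∧ x.2 < η x.1 (x.1 / ε)}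

/-- The cell `Y(x) = {y ∈ [0,1) : x₂ < η(x₁,y)}`. -/
def Ycell (η : ℝ → ℝ → ℝ) (x : ℝ × ℝ) : Set ℝ :=
  {y | y ∈ Ico (0 : ℝ) 1 ∧ x.2 < η x.1 y}

/-- The density `h(x) = |Y(x)|`. -/
def dens (η : ℝ → ℝ → ℝ) (x : ℝ × ℝ) : ℝ := (volume (Ycell η x)).toReal

/-- The measure `h dx`. -/
def hMeas (η : ℝ → ℝ → ℝ) : Measure (ℝ × ℝ) :=
  volume.withDensity fun x => ENNReal.ofReal (dens η x)

/-- The unfolded domain `Ω_u⁺`. -/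
def OmegaU (η : ℝ → ℝ → ℝ) : Set ((ℝ × ℝ) × ℝ) :=
  {p | p.1 ∈ OmegaPlus η ∧ p.2 ∈ Ycell η p.1}

/-- The unfolding operator `(T_ε v)(x,y) = v(ε⌊x₁/ε⌋ + εy, x₂)`. -/
def unfold {α : Type*} (ε : ℝ) (v : ℝ × ℝ → α) : (ℝ × ℝ) × ℝ → α :=
  fun p => v (ε * (⌊p.1.1 / ε⌋ : ℝ) + ε * p.2, p.1.2)

/-- Extension by zero outside `S`. -/
def extz {α : Type*} [Zero α] (S : Set (ℝ × ℝ)) (v : ℝ × ℝ → α) : ℝ × ℝ → α :=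
  S.indicator v

/-- Weak convergence in `L²(S)`: testing against every `g ∈ L²(S)`. -/
def WeakL2 {α : Type*} [MeasurableSpace α] (μ : Measure α) (S : Set α)
    (F : ℕ → α → ℝ) (f : α → ℝ) : Prop :=
  ∀ g : α → ℝ, MemLp g 2 (μ.restrict S) →
    Tendsto (fun n => ∫ x in S, F n x * g x ∂μ) atTop (𝓝 (∫ x in S, f x * g x ∂μ))

/-- Hypotheses (H1)–(H3) on the Carathéodory function `A`. -/
structure AHyp (A : ℝ × ℝ → ℝ × ℝ → ℝ × ℝ) (k₀ : ℝ × ℝ → ℝ) (c₀ c₁ : ℝ) : Prop where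
  measA : ∀ ξ : ℝ × ℝ, Measurable fun x => A x ξ
  contA : ∀ x : ℝ × ℝ, Continuous fun ξ => A x ξ
  c0pos : 0 < c₀
  c1pos : 0 < c₁
  mono : ∀ᵐ x : ℝ × ℝ, ∀ ξ ζ : ℝ × ℝ, ξ ≠ ζ → 0 < dot (A x ξ - A x ζ) (ξ - ζ)
  coer : ∀ x ξ, c₀ * ‖ξ‖ ^ 2 - k₀ x ≤ dot (A x ξ) ξ
  grow : ∀ x ξ, ‖A x ξ‖ ≤ c₁ * ‖ξ‖ + k₀ x

/-- `Du` is the a.e. gradient of `u` on the set `S`. -/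
def AEGradOn (S : Set (ℝ × ℝ)) (u : ℝ × ℝ → ℝ) (Du : ℝ × ℝ → ℝ × ℝ) : Prop :=
  ∀ᵐ x : ℝ × ℝ, x ∈ S → DifferentiableAt ℝ u x ∧
    fderiv ℝ u x (1, 0) = (Du x).1 ∧ fderiv ℝ u x (0, 1) = (Du x).2

/-- A solution of the ε-problem: locally Lipschitz, continuous up to `Γ_b`,
vanishing on `Γ_b`, with a.e. gradient `Du ∈ L²(Ω_ε)²`, satisfying the weak
formulation against all Lipschitz test functions vanishing on `Γ_b` with
square-integrable gradient. -/
structure IsEpsSol (η : ℝ → ℝ → ℝ) (A : ℝ × ℝ → ℝ × ℝ → ℝ × ℝ) (f : ℝ × ℝ → ℝ)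
    (ε : ℝ) (u : ℝ × ℝ → ℝ) (Du : ℝ × ℝ → ℝ × ℝ) : Prop where
  locLip : ∀ x ∈ OmegaEps η ε, ∃ K : NNReal, ∃ t ∈ 𝓝 x, LipschitzOnWith K u t
  contb : ContinuousOn u (OmegaEps η ε ∪ GammaB)
  zerob : ∀ x ∈ GammaB, u x = 0
  grad : AEGradOn (OmegaEps η ε) u Du
  gradL2 : MemLp Du 2 (volume.restrict (OmegaEps η ε))
  weak : ∀ (φ : ℝ × ℝ → ℝ) (Dφ : ℝ × ℝ → ℝ × ℝ),
    (∃ K : NNReal, LipschitzOnWith K φ (OmegaEps η ε ∪ GammaB)) →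
    (∀ x ∈ GammaB, φ x = 0) →
    AEGradOn (OmegaEps η ε) φ Dφ →
    MemLp Dφ 2 (volume.restrict (OmegaEps η ε)) →
    ∫ x in OmegaEps η ε, dot (A x (Du x)) (Dφ x) = ∫ x in OmegaEps η ε, f x * φ x

/-- Membership in the weighted space `W(Ω,Γ_b)`, together with the designated
gradient `gradm` on `Ω⁻` and vertical derivative `d2` (`h`-a.e. on `Ω`): there are
smooth approximations vanishing on `Γ_b` converging in the appropriate norms. -/
def MemW (η : ℝ → ℝ → ℝ) (u : ℝ × ℝ → ℝ) (gradm : ℝ × ℝ → ℝ × ℝ) (d2 : ℝ × ℝ → ℝ) : Prop :=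
  Measurable u ∧
  MemLp gradm 2 (volume.restrict (OmegaMinus η)) ∧
  Integrable (fun x => d2 x ^ 2 * dens η x) (volume.restrict (Omega η)) ∧
  ∃ φ : ℕ → ℝ × ℝ → ℝ,
    (∀ n, ∃ U : Set (ℝ × ℝ), IsOpen U ∧ closure (Omega η) ⊆ U ∧ ContDiffOn ℝ (⊤ : ℕ∞) (φ n) U) ∧
    (∀ n, ∀ x ∈ GammaB, φ n x = 0) ∧
    Tendsto (fun n => ∫ x in Omega η, (φ n x - u x) ^ 2 * dens η x) atTop (𝓝 0) ∧
    Tendsto (fun n => ∫ x in OmegaMinus η,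
      ‖((fderiv ℝ (φ n) x (1, 0), fderiv ℝ (φ n) x (0, 1)) - gradm x : ℝ × ℝ)‖ ^ 2)
      atTop (𝓝 0) ∧
    Tendsto (fun n => ∫ x in Omega η, (fderiv ℝ (φ n) x (0, 1) - d2 x) ^ 2 * dens η x)
      atTop (𝓝 0)

/-- The homogenized (limit) problem satisfied by `(u₀, q̄)` (through the data
`u₀, gradm = ∇u₀|_{Ω⁻}, d2 = ∂₂u₀, qbar`). -/
def LimitProblem (η : ℝ → ℝ → ℝ) (A : ℝ × ℝ → ℝ × ℝ → ℝ × ℝ) (f : ℝ × ℝ → ℝ)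
    (gradm : ℝ × ℝ → ℝ × ℝ) (d2 : ℝ × ℝ → ℝ) (qbar : ℝ × ℝ → ℝ) : Prop :=
  (∀ (φ : ℝ × ℝ → ℝ) (gφ : ℝ × ℝ → ℝ × ℝ) (d2φ : ℝ × ℝ → ℝ), MemW η φ gφ d2φ →
    ∫ x in OmegaMinus η, dot (A x (gradm x)) (gφ x)
      + ∫ x in OmegaPlus η, dens η x * (A x (qbar x, d2 x)).2 * d2φ x
    = ∫ x in OmegaMinus η, f x * φ x + ∫ x in OmegaPlus η, f x * φ x * dens η x) ∧
  ∀ᵐ x ∂volume.restrict (OmegaPlus η), dens η x * (A x (qbar x, d2 x)).1 = 0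



open scoped ENNReal

/-! ### Auxiliary material for the proof of `unfold_strong_convergence` -/

namespace UnfoldAux

/-- The cell map underlying the unfolding operator. -/
def Phi (k : ℕ) (p : (ℝ × ℝ) × ℝ) : ℝ × ℝ :=
  ((1/(k:ℝ)) * (⌊p.1.1 / (1/(k:ℝ))⌋ : ℤ) + (1/(k:ℝ)) * p.2, p.1.2)

theorem Phi_eq (k : ℕ) (hk : 1 ≤ k) (p : (ℝ × ℝ) × ℝ) :
    Phi k p = (((⌊(k:ℝ) * p.1.1⌋ : ℤ) + p.2)/(k:ℝ), p.1.2) := by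
  have hkpos : (0:ℝ) < (k:ℝ) := by exact_mod_cast hk
  have h1 : p.1.1 / (1/(k:ℝ)) = (k:ℝ) * p.1.1 := by field_simp
  simp only [Phi, h1]
  congr 1
  field_simp

theorem Phi_meas (k : ℕ) : Measurable (Phi k) :=
  ((measurable_const.mul (measurable_from_top.comp
    ((measurable_fst.comp measurable_fst).div_const _).floor)).add
    (measurable_const.mul measurable_snd)).prodMk (measurable_snd.comp measurable_fst)

theorem slide (k : ℕ) (hk : 1 ≤ k) (j : ℤ) (H : ℝ → ℝ≥0∞) (hH : Measurable H) :
    ∫⁻ y in Ico (0:ℝ) 1, H (((j:ℝ) + y)/(k:ℝ)) =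
      ENNReal.ofReal (k:ℝ) * ∫⁻ s in Ico ((j:ℝ)/(k:ℝ)) (((j:ℝ)+1)/(k:ℝ)), H s := by
  have hkpos : (0:ℝ) < (k:ℝ) := by exact_mod_cast hk
  set T : ℝ → ℝ := fun y => ((j:ℝ) + y)/(k:ℝ) with hTdef
  have hT : Measurable T := (measurable_const.add measurable_id).div_const _
  have hmem : ∀ y : ℝ, y ∈ Ico (0:ℝ) 1 ↔ T y ∈ Ico ((j:ℝ)/(k:ℝ)) (((j:ℝ)+1)/(k:ℝ)) := by
    intro y
    simp only [mem_Ico, hTdef, div_le_div_iff_of_pos_right hkpos,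
      div_lt_div_iff_of_pos_right hkpos]
    constructor <;> intro h <;> constructor <;> linarith [h.1, h.2]
  set F : ℝ → ℝ≥0∞ := (Ico ((j:ℝ)/(k:ℝ)) (((j:ℝ)+1)/(k:ℝ))).indicator H with hFdef
  have hF : Measurable F := hH.indicator measurableSet_Ico
  have hind : ∀ y : ℝ, (Ico (0:ℝ) 1).indicator (fun y => H (T y)) y = F (T y) := by
    intro y
    by_cases hy : y ∈ Ico (0:ℝ) 1
    · rw [indicator_of_mem hy, hFdef, indicator_of_mem ((hmem y).1 hy)]
    · rw [indicator_of_notMem hy, hFdef, indicator_of_notMem (fun h => hy ((hmem y).2 h))]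
  calc ∫⁻ y in Ico (0:ℝ) 1, H (T y)
      = ∫⁻ y, (Ico (0:ℝ) 1).indicator (fun y => H (T y)) y := by
        rw [lintegral_indicator measurableSet_Ico]
    _ = ∫⁻ y, F (T y) := by simp only [hind]
    _ = ∫⁻ s, F s ∂(Measure.map T volume) := (lintegral_map hF hT).symm
    _ = ENNReal.ofReal (k:ℝ) * ∫⁻ s, F s := by
        have hmap : Measure.map T volume = ENNReal.ofReal (k:ℝ) • volume := by
          have h1 : T = (fun s : ℝ => ((k:ℝ))⁻¹ * s) ∘ (fun y : ℝ => (j:ℝ) + y) := by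
            funext y; simp [hTdef, div_eq_inv_mul]
          rw [h1, ← Measure.map_map (measurable_const_mul _) (measurable_const_add _)]
          rw [map_add_left_eq_self volume (j:ℝ)]
          rw [Real.map_volume_mul_left (a := ((k:ℝ))⁻¹) (by positivity)]
          congr 1
          rw [inv_inv, abs_of_pos hkpos]
        rw [hmap, lintegral_smul_measure, smul_eq_mul]
    _ = ENNReal.ofReal (k:ℝ) * ∫⁻ s in Ico ((j:ℝ)/(k:ℝ)) (((j:ℝ)+1)/(k:ℝ)), H s := by
        rw [hFdef, lintegral_indicator measurableSet_Ico]

theorem cell (k : ℕ) (hk : 1 ≤ k) (j : ℤ) (f : ℝ × ℝ → ℝ≥0∞) (hf : Measurable f) :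
    ∫⁻ p in (Ico ((j:ℝ)/(k:ℝ)) (((j:ℝ)+1)/(k:ℝ)) ×ˢ (univ : Set ℝ)) ×ˢ Ico (0:ℝ) 1,
        f (Phi k p)
      = ∫⁻ z in Ico ((j:ℝ)/(k:ℝ)) (((j:ℝ)+1)/(k:ℝ)) ×ˢ (univ : Set ℝ), f z := by
  have hkpos : (0:ℝ) < (k:ℝ) := by exact_mod_cast hk
  set I := Ico ((j:ℝ)/(k:ℝ)) (((j:ℝ)+1)/(k:ℝ)) with hI
  have hImeas : MeasurableSet I := measurableSet_Ico
  have hbox : MeasurableSet ((I ×ˢ (univ : Set ℝ)) ×ˢ Ico (0:ℝ) 1) :=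
    ((hImeas.prod MeasurableSet.univ).prod measurableSet_Ico)
  have hfloor : ∀ p ∈ (I ×ˢ (univ : Set ℝ)) ×ˢ Ico (0:ℝ) 1,
      f (Phi k p) = f (((j:ℝ) + p.2)/(k:ℝ), p.1.2) := by
    intro p hp
    rw [Phi_eq k hk]
    have hx : p.1.1 ∈ I := hp.1.1
    have hfl : ⌊(k:ℝ) * p.1.1⌋ = j := by
      rw [Int.floor_eq_iff]
      constructor
      · have := hx.1
        calc (j:ℝ) = ((j:ℝ)/(k:ℝ)) * k := by field_simp
        _ ≤ p.1.1 * k := by exact mul_le_mul_of_nonneg_right this hkpos.le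
        _ = (k:ℝ) * p.1.1 := mul_comm _ _
      · have := hx.2
        calc (k:ℝ) * p.1.1 = p.1.1 * k := mul_comm _ _
        _ < (((j:ℝ)+1)/(k:ℝ)) * k := by exact mul_lt_mul_of_pos_right this hkpos
        _ = (j:ℝ) + 1 := by field_simp
    rw [hfl]
  rw [setLIntegral_congr_fun hbox hfloor]
  have hres : (volume : Measure ((ℝ × ℝ) × ℝ)).restrict ((I ×ˢ (univ : Set ℝ)) ×ˢ Ico (0:ℝ) 1)
      = ((volume : Measure (ℝ × ℝ)).restrict (I ×ˢ (univ : Set ℝ))).prod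
          ((volume : Measure ℝ).restrict (Ico (0:ℝ) 1)) := by
    rw [Measure.volume_eq_prod, Measure.prod_restrict]
  have hres2 : (volume : Measure (ℝ × ℝ)).restrict (I ×ˢ (univ : Set ℝ))
      = ((volume : Measure ℝ).restrict I).prod ((volume : Measure ℝ).restrict (univ : Set ℝ)) := by
    rw [Measure.volume_eq_prod, Measure.prod_restrict]
  have hfmeas2 : Measurable fun q : ℝ × ℝ => f (q.2, q.1) := hf.comp measurable_swap
  have hinner_meas : Measurable fun x : ℝ × ℝ => ∫⁻ s in I, f (s, x.2) := by
    have : Measurable fun t : ℝ => ∫⁻ s in I, f (s, t) :=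
      Measurable.lintegral_prod_right' (f := fun q : ℝ × ℝ => f (q.2, q.1)) hfmeas2
    exact this.comp measurable_snd
  calc ∫⁻ p in (I ×ˢ (univ : Set ℝ)) ×ˢ Ico (0:ℝ) 1, f (((j:ℝ) + p.2)/(k:ℝ), p.1.2)
      = ∫⁻ x in I ×ˢ (univ : Set ℝ), ∫⁻ y in Ico (0:ℝ) 1, f (((j:ℝ) + y)/(k:ℝ), x.2) := by
        rw [hres]
        have hg : Measurable fun p : (ℝ × ℝ) × ℝ => f (((j:ℝ) + p.2)/(k:ℝ), p.1.2) :=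
          hf.comp (by fun_prop)
        exact lintegral_prod _ hg.aemeasurable
    _ = ∫⁻ x in I ×ˢ (univ : Set ℝ), ENNReal.ofReal (k:ℝ) * ∫⁻ s in I, f (s, x.2) := by
        apply lintegral_congr
        intro x
        exact slide k hk j (fun s => f (s, x.2)) (hf.comp (measurable_id.prodMk measurable_const))
    _ = ∫⁻ x₁ in I, ∫⁻ x₂, ENNReal.ofReal (k:ℝ) * ∫⁻ s in I, f (s, x₂) := by
        rw [hres2, Measure.restrict_univ]
        exact lintegral_prod _ ((measurable_const.mul hinner_meas).aemeasurable)
    _ = (∫⁻ x₂, ENNReal.ofReal (k:ℝ) * ∫⁻ s in I, f (s, x₂)) * volume I := by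
        exact setLIntegral_const I _
    _ = ∫⁻ z in I ×ˢ (univ : Set ℝ), f z := by
        rw [lintegral_const_mul _
          (Measurable.lintegral_prod_right' (f := fun q : ℝ × ℝ => f (q.2, q.1)) hfmeas2)]
        have hswap : ∫⁻ x₂, ∫⁻ s in I, f (s, x₂) = ∫⁻ s in I, ∫⁻ x₂, f (s, x₂) := by
          apply lintegral_lintegral_swap
          exact (hf.comp measurable_swap).aemeasurable
        rw [hswap]
        have hvol : volume I = ENNReal.ofReal (1/(k:ℝ)) := by
          rw [hI, Real.volume_Ico]
          congr 1
          field_simp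
          ring
        have hrhs : ∫⁻ z in I ×ˢ (univ : Set ℝ), f z = ∫⁻ s in I, ∫⁻ x₂, f (s, x₂) := by
          rw [hres2, Measure.restrict_univ]
          exact lintegral_prod _ hf.aemeasurable
        rw [hrhs, hvol]
        rw [mul_comm (ENNReal.ofReal (k:ℝ)) _, mul_assoc]
        rw [← ENNReal.ofReal_mul (by positivity)]
        rw [mul_one_div_cancel hkpos.ne', ENNReal.ofReal_one, mul_one]

theorem partitionIco (k : ℕ) (hk : 1 ≤ k) :
    (⋃ n ∈ Finset.range k, Ico ((n:ℝ)/(k:ℝ)) (((n:ℝ)+1)/(k:ℝ))) = Ico (0:ℝ) 1 := by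
  have hkpos : (0:ℝ) < (k:ℝ) := by exact_mod_cast hk
  ext s
  simp only [mem_iUnion, Finset.mem_range, mem_Ico, exists_prop]
  constructor
  · rintro ⟨n, hn, h1, h2⟩
    have hnk : (n:ℝ) + 1 ≤ (k:ℝ) := by exact_mod_cast hn
    constructor
    · exact le_trans (by positivity) h1
    · exact lt_of_lt_of_le h2 (by rw [div_le_one hkpos]; exact hnk)
  · rintro ⟨h1, h2⟩
    refine ⟨⌊s * (k:ℝ)⌋.toNat, ?_, ?_, ?_⟩
    · have h3 : s * (k:ℝ) < (k:ℝ) := by nlinarith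
      have h4 : (⌊s * (k:ℝ)⌋ : ℝ) ≤ s * k := Int.floor_le _
      have : ⌊s * (k:ℝ)⌋ < (k:ℤ) := by
        by_contra hcon
        push_neg at hcon
        have : ((k:ℤ):ℝ) ≤ (⌊s * (k:ℝ)⌋:ℝ) := by exact_mod_cast hcon
        push_cast at this
        linarith
      omega
    · have h0 : (0:ℤ) ≤ ⌊s * (k:ℝ)⌋ := Int.floor_nonneg.2 (by positivity)
      have hc : ((⌊s * (k:ℝ)⌋.toNat : ℝ)) = ((⌊s * (k:ℝ)⌋ : ℤ) : ℝ) := by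
        exact_mod_cast congrArg (fun z : ℤ => (z : ℝ)) (Int.toNat_of_nonneg h0)
      rw [hc, div_le_iff₀ hkpos]
      exact Int.floor_le _
    · have h0 : (0:ℤ) ≤ ⌊s * (k:ℝ)⌋ := Int.floor_nonneg.2 (by positivity)
      have hc : ((⌊s * (k:ℝ)⌋.toNat : ℝ)) = ((⌊s * (k:ℝ)⌋ : ℤ) : ℝ) := by
        exact_mod_cast congrArg (fun z : ℤ => (z : ℝ)) (Int.toNat_of_nonneg h0)
      rw [hc, lt_div_iff₀ hkpos]
      exact Int.lt_floor_add_one _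

theorem keyIdentity (k : ℕ) (hk : 1 ≤ k) (f : ℝ × ℝ → ℝ≥0∞) (hf : Measurable f) :
    ∫⁻ p in (Ioo (0:ℝ) 1 ×ˢ (univ : Set ℝ)) ×ˢ Ico (0:ℝ) 1, f (Phi k p)
      = ∫⁻ z in Ico (0:ℝ) 1 ×ˢ (univ : Set ℝ), f z := by
  have hkpos : (0:ℝ) < (k:ℝ) := by exact_mod_cast hk
  set In : ℕ → Set ℝ := fun n => Ico ((n:ℝ)/(k:ℝ)) (((n:ℝ)+1)/(k:ℝ)) with hIn
  have hae : ((Ioo (0:ℝ) 1 ×ˢ (univ : Set ℝ)) ×ˢ Ico (0:ℝ) 1 : Set ((ℝ × ℝ) × ℝ))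
      =ᵐ[volume] ((Ico (0:ℝ) 1 ×ˢ (univ : Set ℝ)) ×ˢ Ico (0:ℝ) 1 : Set ((ℝ × ℝ) × ℝ)) := by
    have hnull : volume ((({0} : Set ℝ) ×ˢ (univ : Set ℝ)) ×ˢ (univ : Set ℝ)) = 0 := by
      rw [Measure.volume_eq_prod, Measure.prod_prod, Measure.volume_eq_prod, Measure.prod_prod]
      simp
    apply measure_symmDiff_eq_zero_iff.1
    apply measure_mono_null _ hnull
    intro p hp
    rw [Set.mem_symmDiff] at hp
    rcases hp with ⟨hin, hout⟩ | ⟨hin, hout⟩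
    · exact absurd ⟨⟨⟨hin.1.1.1.le, hin.1.1.2⟩, trivial⟩, hin.2⟩ hout
    · refine ⟨⟨?_, trivial⟩, trivial⟩
      have h1 : p.1.1 ∈ Ico (0:ℝ) 1 := hin.1.1
      have h2 : p.1.1 ∉ Ioo (0:ℝ) 1 := fun h => hout ⟨⟨h, trivial⟩, hin.2⟩
      simp only [mem_Ico] at h1
      simp only [mem_Ioo, not_and] at h2
      have : p.1.1 = 0 := by
        rcases eq_or_lt_of_le h1.1 with h | h
        · exact h.symm
        · exact absurd h1.2 (h2 h)
      simp [this]
  rw [setLIntegral_congr hae]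
  have hdisj : Set.PairwiseDisjoint (↑(Finset.range k)) In := by
    intro m hm n hn hmn
    have hstep : ∀ a b : ℕ, a < b → Disjoint (In a) (In b) := by
      intro a b hab
      apply Set.Ico_disjoint_Ico.2
      have h1 : ((a:ℝ)+1)/(k:ℝ) ≤ (b:ℝ)/(k:ℝ) := by
        gcongr
        exact_mod_cast hab
      calc min (((a:ℝ)+1)/(k:ℝ)) (((b:ℝ)+1)/(k:ℝ)) ≤ ((a:ℝ)+1)/(k:ℝ) := min_le_left _ _
        _ ≤ (b:ℝ)/(k:ℝ) := h1
        _ ≤ max ((a:ℝ)/(k:ℝ)) ((b:ℝ)/(k:ℝ)) := le_max_right _ _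
    rcases lt_or_gt_of_ne hmn with h | h
    · exact hstep m n h
    · exact (hstep n m h).symm
  have hcover : (⋃ n ∈ Finset.range k, In n) = Ico (0:ℝ) 1 := partitionIco k hk
  have hsplit : ((Ico (0:ℝ) 1 ×ˢ (univ : Set ℝ)) ×ˢ Ico (0:ℝ) 1 : Set ((ℝ × ℝ) × ℝ))
      = ⋃ n ∈ Finset.range k, (In n ×ˢ (univ : Set ℝ)) ×ˢ Ico (0:ℝ) 1 := by
    rw [← hcover]
    rw [iUnion_prod_const, iUnion_prod_const]
    simp_rw [iUnion_prod_const]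
  rw [hsplit]
  have hdisj2 : Set.PairwiseDisjoint (↑(Finset.range k))
      (fun n => (In n ×ˢ (univ : Set ℝ)) ×ˢ Ico (0:ℝ) 1) := by
    intro m hm n hn hmn
    have hd : Disjoint (In m) (In n) := hdisj hm hn hmn
    exact Set.disjoint_left.2 (fun p hp hq => Set.disjoint_left.1 hd hp.1.1 hq.1.1)
  have hmeasn : ∀ n ∈ Finset.range k, MeasurableSet ((In n ×ˢ (univ : Set ℝ)) ×ˢ Ico (0:ℝ) 1) :=
    fun n _ => ((measurableSet_Ico.prod MeasurableSet.univ).prod measurableSet_Ico)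
  rw [lintegral_biUnion_finset hdisj2 hmeasn]
  have hcell : ∀ n ∈ Finset.range k,
      ∫⁻ p in (In n ×ˢ (univ : Set ℝ)) ×ˢ Ico (0:ℝ) 1, f (Phi k p)
        = ∫⁻ z in In n ×ˢ (univ : Set ℝ), f z := by
    intro n _
    have := cell k hk (n : ℤ) f hf
    push_cast at this
    exact this
  rw [Finset.sum_congr rfl hcell]
  have hdisj3 : Set.PairwiseDisjoint (↑(Finset.range k)) (fun n => In n ×ˢ (univ : Set ℝ)) := by
    intro m hm n hn hmn
    have hd : Disjoint (In m) (In n) := hdisj hm hn hmn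
    exact Set.disjoint_left.2 (fun p hp hq => Set.disjoint_left.1 hd hp.1 hq.1)
  rw [← lintegral_biUnion_finset hdisj3
    (fun n _ => measurableSet_Ico.prod MeasurableSet.univ)]
  have hun : (⋃ n ∈ Finset.range k, In n ×ˢ (univ : Set ℝ)) = Ico (0:ℝ) 1 ×ˢ (univ : Set ℝ) := by
    rw [← hcover]
    simp_rw [iUnion_prod_const]
  rw [hun]

theorem lint_sq_eq {α : Type*} [MeasurableSpace α] (f : α → ℝ) (μ : Measure α) :
    ∫⁻ x, ENNReal.ofReal ((f x)^2) ∂μ = (eLpNorm f 2 μ)^2 := by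
  rw [eLpNorm_eq_lintegral_rpow_enorm_toReal (by norm_num) (by norm_num)]
  have h2 : (2:ℝ≥0∞).toReal = 2 := by norm_num
  rw [h2]
  rw [← ENNReal.rpow_natCast _ 2, ← ENNReal.rpow_mul]
  norm_num
  apply lintegral_congr
  intro x
  rw [← sq_abs, ENNReal.ofReal_pow (abs_nonneg _), Real.enorm_eq_ofReal_abs]

end UnfoldAux

section EtaAux

variable {η : ℝ → ℝ → ℝ} {K : NNReal}

theorem eta_slice_est (hK : LipschitzWith K fun p : ℝ × ℝ => η p.1 p.2) (s t y : ℝ) :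
    |η s y - η t y| ≤ (K:ℝ) * |s - t| := by
  have := hK.dist_le_mul (s, y) (t, y)
  simpa [Real.dist_eq, Prod.dist_eq, dist_self, Real.dist_eq] using this

theorem img_ne (η : ℝ → ℝ → ℝ) (t : ℝ) : (η t '' Icc 0 1).Nonempty :=
  ⟨η t 0, ⟨0, by norm_num, rfl⟩⟩

theorem img_bddB (hK : LipschitzWith K fun p : ℝ × ℝ => η p.1 p.2) (t : ℝ) :
    BddBelow (η t '' Icc 0 1) ∧ BddAbove (η t '' Icc 0 1) := by
  have hc : ContinuousOn (η t) (Icc 0 1) :=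
    (hK.continuous.comp (Continuous.prodMk_right t)).continuousOn
  have hcomp : IsCompact (η t '' Icc 0 1) := (isCompact_Icc).image_of_continuousOn hc
  exact ⟨hcomp.bddBelow, hcomp.bddAbove⟩

theorem etaMinus_lip (hK : LipschitzWith K fun p : ℝ × ℝ => η p.1 p.2) :
    LipschitzWith K (etaMinus η) := by
  rw [lipschitzWith_iff_dist_le_mul]
  intro s t
  rw [Real.dist_eq, Real.dist_eq]
  have key : ∀ a b : ℝ, etaMinus η a - (K:ℝ) * |a - b| ≤ etaMinus η b := by
    intro a b
    apply le_csInf (img_ne η b)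
    rintro z ⟨y, hy, rfl⟩
    have h1 : etaMinus η a ≤ η a y := csInf_le (img_bddB hK a).1 ⟨y, hy, rfl⟩
    have h2 : |η a y - η b y| ≤ (K:ℝ) * |a - b| := eta_slice_est hK a b y
    have := abs_le.1 h2
    linarith [this.1, this.2]
  rw [abs_le]
  constructor
  · have := key t s; have h := abs_sub_comm s t; rw [h]; linarith
  · have := key s t; linarith

theorem etaPlus_lip (hK : LipschitzWith K fun p : ℝ × ℝ => η p.1 p.2) :
    LipschitzWith K (etaPlus η) := by
  rw [lipschitzWith_iff_dist_le_mul]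
  intro s t
  rw [Real.dist_eq, Real.dist_eq]
  have key : ∀ a b : ℝ, etaPlus η b ≤ etaPlus η a + (K:ℝ) * |a - b| := by
    intro a b
    apply csSup_le (img_ne η b)
    rintro z ⟨y, hy, rfl⟩
    have h1 : η a y ≤ etaPlus η a := le_csSup (img_bddB hK a).2 ⟨y, hy, rfl⟩
    have h2 : |η a y - η b y| ≤ (K:ℝ) * |a - b| := eta_slice_est hK a b y
    have := abs_le.1 h2
    linarith [this.1, this.2]
  rw [abs_le]
  constructor
  · have := key s t; have h := abs_sub_comm s t; linarith
  · have := key t s; have h := abs_sub_comm s t; rw [h]; linarith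

theorem omegaPlus_open (hK : LipschitzWith K fun p : ℝ × ℝ => η p.1 p.2) :
    IsOpen (OmegaPlus η) := by
  have h1 : IsOpen {x : ℝ × ℝ | 0 < x.1} := isOpen_lt continuous_const continuous_fst
  have h2 : IsOpen {x : ℝ × ℝ | x.1 < 1} := isOpen_lt continuous_fst continuous_const
  have h3 : IsOpen {x : ℝ × ℝ | etaMinus η x.1 < x.2} :=
    isOpen_lt ((etaMinus_lip hK).continuous.comp continuous_fst) continuous_snd
  have h4 : IsOpen {x : ℝ × ℝ | x.2 < etaPlus η x.1} :=
    isOpen_lt continuous_snd ((etaPlus_lip hK).continuous.comp continuous_fst)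
  have heq : OmegaPlus η = ({x : ℝ × ℝ | 0 < x.1} ∩ {x | x.1 < 1}) ∩
      ({x : ℝ × ℝ | etaMinus η x.1 < x.2} ∩ {x | x.2 < etaPlus η x.1}) := by
    ext x; simp [OmegaPlus, and_assoc]
  rw [heq]
  exact ((h1.inter h2).inter (h3.inter h4))

theorem omegaU_meas (hK : LipschitzWith K fun p : ℝ × ℝ => η p.1 p.2) :
    MeasurableSet (OmegaU η) := by
  have h1 : MeasurableSet {p : (ℝ × ℝ) × ℝ | p.1 ∈ OmegaPlus η} :=
    (omegaPlus_open hK).measurableSet.preimage measurable_fst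
  have h2 : MeasurableSet {p : (ℝ × ℝ) × ℝ | p.2 ∈ Ico (0:ℝ) 1} :=
    measurableSet_Ico.preimage measurable_snd
  have h3 : MeasurableSet {p : (ℝ × ℝ) × ℝ | p.1.2 < η p.1.1 p.2} := by
    have ho : IsOpen {p : (ℝ × ℝ) × ℝ | p.1.2 < η p.1.1 p.2} := by
      apply isOpen_lt (continuous_snd.comp continuous_fst)
      exact hK.continuous.comp ((continuous_fst.comp continuous_fst).prodMk continuous_snd)
    exact ho.measurableSet
  have heq : OmegaU η = {p : (ℝ × ℝ) × ℝ | p.1 ∈ OmegaPlus η} ∩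
      ({p : (ℝ × ℝ) × ℝ | p.2 ∈ Ico (0:ℝ) 1} ∩ {p : (ℝ × ℝ) × ℝ | p.1.2 < η p.1.1 p.2}) := by
    ext p; simp [OmegaU, Ycell, and_assoc]
  rw [heq]
  exact h1.inter (h2.inter h3)

theorem etaPlus_bound (hK : LipschitzWith K fun p : ℝ × ℝ => η p.1 p.2) :
    ∀ t ∈ Icc (0:ℝ) 1, etaPlus η t ≤ η 0 0 + (K:ℝ) + 1 := by
  intro t ht
  apply csSup_le (img_ne η t)
  rintro z ⟨y, hy, rfl⟩
  have hdle := hK.dist_le_mul (t, y) (0, 0)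
  rw [Real.dist_eq] at hdle
  have hd : dist ((t,y) : ℝ × ℝ) ((0,0) : ℝ × ℝ) ≤ 1 := by
    rw [Prod.dist_eq]
    simp only [Real.dist_eq, sub_zero]
    apply max_le
    · rw [abs_of_nonneg ht.1]; exact ht.2
    · rw [abs_of_nonneg hy.1]; exact hy.2
  have h1 : |η t y - η 0 0| ≤ (K:ℝ) * 1 := le_trans hdle (by
    exact mul_le_mul_of_nonneg_left hd (by positivity))
  have := (abs_le.1 h1).2
  linarith

theorem omegaU_sub_box : OmegaU η ⊆ (Ioo (0:ℝ) 1 ×ˢ (univ : Set ℝ)) ×ˢ Ico (0:ℝ) 1 :=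
  fun p hp => ⟨⟨⟨hp.1.1, hp.1.2.1⟩, trivial⟩, hp.2.1⟩

theorem omegaU_sub_prod : OmegaU η ⊆ OmegaPlus η ×ˢ Ico (0:ℝ) 1 :=
  fun p hp => ⟨hp.1, hp.2.1⟩

theorem omegaU_vol (hK : LipschitzWith K fun p : ℝ × ℝ => η p.1 p.2)
    (hpos : ∃ c : ℝ, 0 < c ∧ ∀ t y, c ≤ η t y) :
    volume (OmegaU η) < ⊤ := by
  set B : ℝ := η 0 0 + (K:ℝ) + 1 with hB
  have hsub : OmegaU η ⊆ (Ioo (0:ℝ) 1 ×ˢ Ioo (0:ℝ) B) ×ˢ Ico (0:ℝ) 1 := by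
    intro p hp
    obtain ⟨c, hc, hcle⟩ := hpos
    refine ⟨⟨⟨hp.1.1, hp.1.2.1⟩, ?_, ?_⟩, hp.2.1⟩
    · have h1 : etaMinus η p.1.1 < p.1.2 := hp.1.2.2.1
      have h2 : c ≤ etaMinus η p.1.1 := by
        apply le_csInf (img_ne η p.1.1)
        rintro z ⟨y, _, rfl⟩
        exact hcle _ _
      linarith
    · have h1 : p.1.2 < etaPlus η p.1.1 := hp.1.2.2.2
      have h2 : etaPlus η p.1.1 ≤ B :=
        etaPlus_bound hK p.1.1 ⟨hp.1.1.le, hp.1.2.1.le⟩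
      linarith
  apply lt_of_le_of_lt (measure_mono hsub)
  rw [Measure.volume_eq_prod, Measure.prod_prod, Measure.volume_eq_prod, Measure.prod_prod]
  exact ENNReal.mul_lt_top (ENNReal.mul_lt_top (by simp) (by simp)) (by simp)

end EtaAux


/-- for `u ∈ L²(Ω⁺)` (extended by zero), `T_ε u → u` strongly in
`L²(Ω_u⁺)`. -/
theorem unfold_strong_convergence (η : ℝ → ℝ → ℝ) (hη : EtaHyp η) (u : ℝ × ℝ → ℝ)
    (hu : MemLp u 2 (volume.restrict (OmegaPlus η))) :
    Tendsto (fun k : ℕ => ∫ p in OmegaU η,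
        (unfold (1 / (k : ℝ)) (extz (OmegaPlus η) u) p - u p.1) ^ 2)
      atTop (𝓝 0) := by
  classical
  obtain ⟨K, hK⟩ := hη.lip
  have hΩo : IsOpen (OmegaPlus η) := omegaPlus_open hK
  have hΩm : MeasurableSet (OmegaPlus η) := hΩo.measurableSet
  have hUm : MeasurableSet (OmegaU η) := omegaU_meas hK
  have hUvol : volume (OmegaU η) < ⊤ := omegaU_vol hK hη.pos
  have hPhimeas : ∀ k : ℕ, Measurable (UnfoldAux.Phi k) := UnfoldAux.Phi_meas
  set u' : ℝ × ℝ → ℝ := hu.aestronglyMeasurable.mk u with hu'def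
  have hu'meas : Measurable u' := hu.aestronglyMeasurable.stronglyMeasurable_mk.measurable
  have huu' : u =ᵐ[volume.restrict (OmegaPlus η)] u' := hu.aestronglyMeasurable.ae_eq_mk
  set w : ℝ × ℝ → ℝ := (OmegaPlus η).indicator u' with hwdef
  have hwmeas : Measurable w := hu'meas.indicator hΩm
  have hwL2 : MemLp w 2 volume := (memLp_indicator_iff_restrict hΩm).2 (hu.ae_eq huu')
  set J : ℕ → ℝ≥0∞ :=
    fun k => ∫⁻ p in OmegaU η, ENNReal.ofReal ((w (UnfoldAux.Phi k p) - w p.1)^2) with hJdef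
  -- Main limit: J → 0
  have hJ : Tendsto J atTop (𝓝 0) := by
    rw [ENNReal.tendsto_nhds_zero]
    intro ε0 hε0
    have h9pos : (0:ℝ≥0∞) < ε0/3/3 :=
      ENNReal.div_pos (ENNReal.div_pos hε0.ne' (by norm_num)).ne' (by norm_num)
    set εtgt : ℝ≥0∞ := min (ε0/3/3) 1 with hεtgt
    have hεtgt0 : εtgt ≠ 0 := (lt_min h9pos one_pos).ne'
    have hεtgt_top : εtgt ≠ ⊤ := (lt_of_le_of_lt (min_le_right _ _) (by norm_num)).ne
    set εa : ℝ≥0∞ := εtgt ^ ((1:ℝ)/2) with hεa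
    have hεa0 : εa ≠ 0 := by
      rw [hεa]
      intro h
      rcases ENNReal.rpow_eq_zero_iff.1 h with ⟨h1, _⟩ | ⟨_, h2⟩
      · exact hεtgt0 h1
      · norm_num at h2
    have hεasq : εa ^ (2:ℕ) = εtgt := by
      rw [hεa, ← ENNReal.rpow_natCast (εtgt ^ ((1:ℝ)/2)) 2, ← ENNReal.rpow_mul]
      norm_num
    obtain ⟨g, hgsupp, hgclose, hgcont, hgmem⟩ :=
      hwL2.exists_hasCompactSupport_eLpNorm_sub_le (by norm_num : (2:ℝ≥0∞) ≠ ⊤) hεa0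
    have hglobal : (∫⁻ x, ENNReal.ofReal ((w x - g x)^2)) ≤ ε0/3/3 := by
      calc (∫⁻ x, ENNReal.ofReal ((w x - g x)^2)) = (eLpNorm (w - g) 2 volume)^2 := by
            rw [← UnfoldAux.lint_sq_eq (w - g) volume]
            simp only [Pi.sub_apply]
        _ ≤ εa^2 := pow_le_pow_left₀ zero_le hgclose 2
        _ = εtgt := hεasq
        _ ≤ ε0/3/3 := min_le_left _ _
    obtain ⟨M, hM⟩ := hgsupp.exists_bound_of_continuous hgcont
    have hM0 : 0 ≤ M := le_trans (norm_nonneg _) (hM 0)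
    set wg : ℝ × ℝ → ℝ := (OmegaPlus η).indicator g with hwgdef
    have hwgmeas : Measurable wg := hgcont.measurable.indicator hΩm
    have hwgbdd : ∀ x, |wg x| ≤ M := by
      intro x
      rw [hwgdef]
      by_cases hx : x ∈ OmegaPlus η
      · rw [indicator_of_mem hx]
        exact (Real.norm_eq_abs _ ▸ hM x)
      · rw [indicator_of_notMem hx]
        simpa using hM0
    have hq : ∀ x, ENNReal.ofReal ((w x - wg x)^2) ≤ ENNReal.ofReal ((w x - g x)^2) := by
      intro x
      by_cases hx : x ∈ OmegaPlus η
      · rw [hwdef, hwgdef, indicator_of_mem hx, indicator_of_mem hx]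
      · rw [hwdef, hwgdef, indicator_of_notMem hx, indicator_of_notMem hx]
        simp
    have hA : ∀ k, 1 ≤ k →
        (∫⁻ p in OmegaU η, ENNReal.ofReal ((w (UnfoldAux.Phi k p) - wg (UnfoldAux.Phi k p))^2))
          ≤ ε0/3/3 := by
      intro k hk
      have hqmeas : Measurable fun x : ℝ × ℝ => ENNReal.ofReal ((w x - wg x)^2) :=
        ((hwmeas.sub hwgmeas).pow_const 2).ennreal_ofReal
      calc (∫⁻ p in OmegaU η, ENNReal.ofReal ((w (UnfoldAux.Phi k p) - wg (UnfoldAux.Phi k p))^2))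
          ≤ ∫⁻ p in (Ioo (0:ℝ) 1 ×ˢ (univ : Set ℝ)) ×ˢ Ico (0:ℝ) 1,
              ENNReal.ofReal ((w (UnfoldAux.Phi k p) - wg (UnfoldAux.Phi k p))^2) :=
            lintegral_mono' (Measure.restrict_mono omegaU_sub_box le_rfl) le_rfl
        _ = ∫⁻ z in Ico (0:ℝ) 1 ×ˢ (univ : Set ℝ), ENNReal.ofReal ((w z - wg z)^2) :=
            UnfoldAux.keyIdentity k hk _ hqmeas
        _ ≤ ∫⁻ z, ENNReal.ofReal ((w z - wg z)^2) := setLIntegral_le_lintegral _ _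
        _ ≤ ∫⁻ z, ENNReal.ofReal ((w z - g z)^2) := lintegral_mono hq
        _ ≤ ε0/3/3 := hglobal
    have hC : (∫⁻ p in OmegaU η, ENNReal.ofReal ((g p.1 - w p.1)^2)) ≤ ε0/3/3 := by
      have hrmeas : Measurable fun x : ℝ × ℝ => ENNReal.ofReal ((g x - w x)^2) :=
        ((hgcont.measurable.sub hwmeas).pow_const 2).ennreal_ofReal
      calc (∫⁻ p in OmegaU η, ENNReal.ofReal ((g p.1 - w p.1)^2))
          ≤ ∫⁻ p in OmegaPlus η ×ˢ Ico (0:ℝ) 1, ENNReal.ofReal ((g p.1 - w p.1)^2) :=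
            lintegral_mono' (Measure.restrict_mono omegaU_sub_prod le_rfl) le_rfl
        _ = ∫⁻ x in OmegaPlus η, ENNReal.ofReal ((g x - w x)^2) := by
            have hres : (volume : Measure ((ℝ × ℝ) × ℝ)).restrict (OmegaPlus η ×ˢ Ico (0:ℝ) 1)
                = ((volume : Measure (ℝ × ℝ)).restrict (OmegaPlus η)).prod
                    ((volume : Measure ℝ).restrict (Ico (0:ℝ) 1)) := by
              rw [Measure.volume_eq_prod, Measure.prod_restrict]
            have hgm : Measurable fun p : (ℝ × ℝ) × ℝ => ENNReal.ofReal ((g p.1 - w p.1)^2) :=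
              hrmeas.comp measurable_fst
            rw [hres,
              lintegral_prod (fun p => ENNReal.ofReal ((g p.1 - w p.1)^2)) hgm.aemeasurable]
            simp [lintegral_const, Real.volume_Ico]
        _ ≤ ∫⁻ x, ENNReal.ofReal ((g x - w x)^2) := setLIntegral_le_lintegral _ _
        _ = ∫⁻ x, ENNReal.ofReal ((w x - g x)^2) := by
            apply lintegral_congr
            intro x
            rw [show (g x - w x)^2 = (w x - g x)^2 from by ring]
        _ ≤ ε0/3/3 := hglobal
    have hBmeas : ∀ k : ℕ, Measurable
        fun p : (ℝ × ℝ) × ℝ => ENNReal.ofReal ((wg (UnfoldAux.Phi k p) - g p.1)^2) := fun k =>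
      (((hwgmeas.comp (hPhimeas k)).sub (hgcont.measurable.comp measurable_fst)).pow_const
        2).ennreal_ofReal
    have hB : Tendsto (fun k => ∫⁻ p in OmegaU η,
        ENNReal.ofReal ((wg (UnfoldAux.Phi k p) - g p.1)^2)) atTop (𝓝 0) := by
      have hDC := tendsto_lintegral_of_dominated_convergence
        (μ := volume.restrict (OmegaU η))
        (F := fun k p => ENNReal.ofReal ((wg (UnfoldAux.Phi k p) - g p.1)^2))
        (f := fun _ => (0:ℝ≥0∞))
        (bound := fun _ => ENNReal.ofReal ((2*M)^2))
        hBmeas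
        (by
          intro k
          apply ae_of_all
          intro p
          apply ENNReal.ofReal_le_ofReal
          have h1 := abs_le.1 (hwgbdd (UnfoldAux.Phi k p))
          have h2 := abs_le.1 (Real.norm_eq_abs (g p.1) ▸ hM p.1)
          apply sq_le_sq'
          · linarith [h1.1, h2.2]
          · linarith [h1.2, h2.1])
        (by
          rw [lintegral_const, Measure.restrict_apply_univ]
          exact (ENNReal.mul_lt_top ENNReal.ofReal_lt_top hUvol).ne)
        ?_
      · simpa using hDC
      · rw [ae_restrict_iff' hUm]
        apply ae_of_all
        intro p hp
        have hp1 : p.1 ∈ OmegaPlus η := hp.1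
        have hy0 : (0:ℝ) ≤ p.2 := hp.2.1.1
        have hy1 : p.2 < 1 := hp.2.1.2
        have hfirst : Tendsto (fun k : ℕ => (UnfoldAux.Phi k p).1) atTop (𝓝 p.1.1) := by
          have hlow : Tendsto (fun k : ℕ => p.1.1 - 1/(k:ℝ)) atTop (𝓝 p.1.1) := by
            have := tendsto_const_nhds (x := p.1.1) (f := atTop (α := ℕ))
              |>.sub tendsto_one_div_atTop_nhds_zero_nat
            simpa using this
          have hhigh : Tendsto (fun k : ℕ => p.1.1 + 1/(k:ℝ)) atTop (𝓝 p.1.1) := by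
            have := tendsto_const_nhds (x := p.1.1) (f := atTop (α := ℕ))
              |>.add tendsto_one_div_atTop_nhds_zero_nat
            simpa using this
          apply tendsto_of_tendsto_of_tendsto_of_le_of_le' hlow hhigh
          · filter_upwards [eventually_ge_atTop 1] with k hk
            have hkpos : (0:ℝ) < (k:ℝ) := by exact_mod_cast hk
            rw [UnfoldAux.Phi_eq k hk]
            dsimp only
            rw [le_div_iff₀ hkpos]
            have h1 : (k:ℝ) * p.1.1 < (⌊(k:ℝ) * p.1.1⌋ : ℝ) + 1 := Int.lt_floor_add_one _
            have hkk : (1/(k:ℝ)) * (k:ℝ) = 1 := one_div_mul_cancel hkpos.ne'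
            nlinarith [h1, hy0, hkk]
          · filter_upwards [eventually_ge_atTop 1] with k hk
            have hkpos : (0:ℝ) < (k:ℝ) := by exact_mod_cast hk
            rw [UnfoldAux.Phi_eq k hk]
            dsimp only
            rw [div_le_iff₀ hkpos]
            have h1 : ((⌊(k:ℝ) * p.1.1⌋ : ℝ)) ≤ (k:ℝ) * p.1.1 := Int.floor_le _
            have hkk : (1/(k:ℝ)) * (k:ℝ) = 1 := one_div_mul_cancel hkpos.ne'
            nlinarith [h1, hy1.le, hkk]
        have hPt : Tendsto (fun k : ℕ => UnfoldAux.Phi k p) atTop (𝓝 p.1) := by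
          have h2 : Tendsto (fun k : ℕ => ((UnfoldAux.Phi k p).1, (UnfoldAux.Phi k p).2))
              atTop (𝓝 (p.1.1, p.1.2)) := by
            apply hfirst.prodMk_nhds
            have : ∀ k : ℕ, (UnfoldAux.Phi k p).2 = p.1.2 := fun _ => rfl
            simp only [this]
            exact tendsto_const_nhds
          simpa using h2
        have hev : ∀ᶠ k : ℕ in atTop, UnfoldAux.Phi k p ∈ OmegaPlus η :=
          hPt (hΩo.mem_nhds hp1)
        have hgten : Tendsto (fun k : ℕ =>
            ENNReal.ofReal ((g (UnfoldAux.Phi k p) - g p.1)^2)) atTop (𝓝 0) := by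
          have h1 : Tendsto (fun k : ℕ => g (UnfoldAux.Phi k p)) atTop (𝓝 (g p.1)) :=
            (hgcont.tendsto p.1).comp hPt
          have h2 : Tendsto (fun k : ℕ => (g (UnfoldAux.Phi k p) - g p.1)^2)
              atTop (𝓝 ((g p.1 - g p.1)^2)) := (h1.sub tendsto_const_nhds).pow 2
          have h3 := (ENNReal.continuous_ofReal.tendsto _).comp h2
          simpa [Function.comp_def] using h3
        apply Tendsto.congr' ?_ hgten
        filter_upwards [hev] with k hkmem
        rw [hwgdef, indicator_of_mem hkmem]
    have hsplit : ∀ k, J k ≤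
        3 * (∫⁻ p in OmegaU η,
          ENNReal.ofReal ((w (UnfoldAux.Phi k p) - wg (UnfoldAux.Phi k p))^2))
        + 3 * (∫⁻ p in OmegaU η, ENNReal.ofReal ((wg (UnfoldAux.Phi k p) - g p.1)^2))
        + 3 * (∫⁻ p in OmegaU η, ENNReal.ofReal ((g p.1 - w p.1)^2)) := by
      intro k
      have hptwise : ∀ p : (ℝ × ℝ) × ℝ, ENNReal.ofReal ((w (UnfoldAux.Phi k p) - w p.1)^2) ≤
          3 * ENNReal.ofReal ((w (UnfoldAux.Phi k p) - wg (UnfoldAux.Phi k p))^2)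
          + 3 * ENNReal.ofReal ((wg (UnfoldAux.Phi k p) - g p.1)^2)
          + 3 * ENNReal.ofReal ((g p.1 - w p.1)^2) := by
        intro p
        set a := w (UnfoldAux.Phi k p) - wg (UnfoldAux.Phi k p) with ha
        set b := wg (UnfoldAux.Phi k p) - g p.1 with hb
        set c := g p.1 - w p.1 with hc
        have habc : w (UnfoldAux.Phi k p) - w p.1 = a + b + c := by
          rw [ha, hb, hc]; ring
        calc ENNReal.ofReal ((w (UnfoldAux.Phi k p) - w p.1)^2)
            = ENNReal.ofReal ((a+b+c)^2) := by rw [habc]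
          _ ≤ ENNReal.ofReal (3*a^2 + (3*b^2 + 3*c^2)) := ENNReal.ofReal_le_ofReal
              (by nlinarith [sq_nonneg (a-b), sq_nonneg (b-c), sq_nonneg (a-c)])
          _ = ENNReal.ofReal (3*a^2) + (ENNReal.ofReal (3*b^2) + ENNReal.ofReal (3*c^2)) := by
              rw [ENNReal.ofReal_add (by positivity) (by positivity),
                ENNReal.ofReal_add (by positivity) (by positivity)]
          _ = 3 * ENNReal.ofReal (a^2) + 3 * ENNReal.ofReal (b^2) + 3 * ENNReal.ofReal (c^2) := by
              rw [ENNReal.ofReal_mul (by norm_num), ENNReal.ofReal_mul (by norm_num),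
                ENNReal.ofReal_mul (by norm_num)]
              norm_num [add_assoc]
      have hm1 : Measurable fun p : (ℝ × ℝ) × ℝ =>
          3 * ENNReal.ofReal ((w (UnfoldAux.Phi k p) - wg (UnfoldAux.Phi k p))^2) :=
        measurable_const.mul (((hwmeas.comp (hPhimeas k)).sub
          (hwgmeas.comp (hPhimeas k))).pow_const 2).ennreal_ofReal
      have hm2 : Measurable fun p : (ℝ × ℝ) × ℝ =>
          3 * ENNReal.ofReal ((wg (UnfoldAux.Phi k p) - g p.1)^2) :=
        measurable_const.mul (hBmeas k)
      have hm3 : Measurable fun p : (ℝ × ℝ) × ℝ =>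
          3 * ENNReal.ofReal ((g p.1 - w p.1)^2) :=
        measurable_const.mul (((hgcont.measurable.comp measurable_fst).sub
          (hwmeas.comp measurable_fst)).pow_const 2).ennreal_ofReal
      calc J k ≤ ∫⁻ p in OmegaU η,
          (3 * ENNReal.ofReal ((w (UnfoldAux.Phi k p) - wg (UnfoldAux.Phi k p))^2)
          + 3 * ENNReal.ofReal ((wg (UnfoldAux.Phi k p) - g p.1)^2)
          + 3 * ENNReal.ofReal ((g p.1 - w p.1)^2)) := lintegral_mono hptwise
        _ = _ := by
          have hma : Measurable fun p : (ℝ × ℝ) × ℝ =>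
              ENNReal.ofReal ((w (UnfoldAux.Phi k p) - wg (UnfoldAux.Phi k p))^2) :=
            (((hwmeas.comp (hPhimeas k)).sub (hwgmeas.comp (hPhimeas k))).pow_const
              2).ennreal_ofReal
          have hmb : Measurable fun p : (ℝ × ℝ) × ℝ =>
              ENNReal.ofReal ((wg (UnfoldAux.Phi k p) - g p.1)^2) := hBmeas k
          have hmc : Measurable fun p : (ℝ × ℝ) × ℝ =>
              ENNReal.ofReal ((g p.1 - w p.1)^2) :=
            (((hgcont.measurable.comp measurable_fst).sub
              (hwmeas.comp measurable_fst)).pow_const 2).ennreal_ofReal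
          rw [lintegral_add_right _ hm3, lintegral_add_right _ hm2,
            lintegral_const_mul _ hma, lintegral_const_mul _ hmb, lintegral_const_mul _ hmc]
    have h33 : (3:ℝ≥0∞) * (ε0/3/3) = ε0/3 :=
      ENNReal.mul_div_cancel' (by norm_num) (by norm_num)
    filter_upwards [eventually_ge_atTop 1,
      (ENNReal.tendsto_nhds_zero.1 hB) (ε0/3/3) h9pos] with k hk1 hk2
    calc J k ≤ _ := hsplit k
      _ ≤ 3*(ε0/3/3) + 3*(ε0/3/3) + 3*(ε0/3/3) :=
          add_le_add (add_le_add (mul_le_mul_right (hA k hk1) 3)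
            (mul_le_mul_right hk2 3)) (mul_le_mul_right hC 3)
      _ = ε0/3 + ε0/3 + ε0/3 := by rw [h33]
      _ = ε0 := ENNReal.add_thirds ε0
  -- Step 1: identify the integrals
  have hstep1 : ∀ᶠ k : ℕ in atTop,
      (∫ p in OmegaU η, (unfold (1/(k:ℝ)) (extz (OmegaPlus η) u) p - u p.1)^2)
        = (J k).toReal := by
    have hNnull : volume {x : ℝ × ℝ | ¬ (x ∈ OmegaPlus η → u x = u' x)} = 0 := by
      have h := (ae_restrict_iff' hΩm).1 huu'
      rwa [ae_iff] at h
    obtain ⟨N₁, hN₁sub, hN₁meas, hN₁null⟩ := exists_measurable_superset_of_null hNnull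
    have hP : ∀ x ∉ N₁, (x ∈ OmegaPlus η → u x = u' x) := by
      intro x hx
      by_contra hcon
      exact hx (hN₁sub hcon)
    have hfst : volume {p : (ℝ × ℝ) × ℝ | p.1 ∈ N₁} = 0 := by
      have heq : {p : (ℝ × ℝ) × ℝ | p.1 ∈ N₁} = N₁ ×ˢ (univ : Set ℝ) := by
        ext p; simp [Set.mem_prod]
      rw [heq, Measure.volume_eq_prod, Measure.prod_prod, hN₁null, zero_mul]
    filter_upwards [eventually_ge_atTop 1] with k hk
    have hpre : (volume.restrict (OmegaU η)) {p : (ℝ × ℝ) × ℝ | UnfoldAux.Phi k p ∈ N₁} = 0 := by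
      have hkey := UnfoldAux.keyIdentity k hk (N₁.indicator fun _ => (1:ℝ≥0∞))
        (measurable_const.indicator hN₁meas)
      have hlhs : (∫⁻ p in (Ioo (0:ℝ) 1 ×ˢ (univ : Set ℝ)) ×ˢ Ico (0:ℝ) 1,
          (N₁.indicator fun _ => (1:ℝ≥0∞)) (UnfoldAux.Phi k p))
          = volume ((UnfoldAux.Phi k ⁻¹' N₁) ∩
              ((Ioo (0:ℝ) 1 ×ˢ (univ : Set ℝ)) ×ˢ Ico (0:ℝ) 1)) := by
        have hindeq : (fun p => (N₁.indicator fun _ => (1:ℝ≥0∞)) (UnfoldAux.Phi k p))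
            = (UnfoldAux.Phi k ⁻¹' N₁).indicator fun _ => (1:ℝ≥0∞) := by
          funext p
          by_cases hp : UnfoldAux.Phi k p ∈ N₁
          · simp [Set.indicator_of_mem, hp, Set.mem_preimage]
          · simp [Set.indicator_of_notMem, hp, Set.mem_preimage]
        rw [show (∫⁻ p in (Ioo (0:ℝ) 1 ×ˢ (univ : Set ℝ)) ×ˢ Ico (0:ℝ) 1,
            (N₁.indicator fun _ => (1:ℝ≥0∞)) (UnfoldAux.Phi k p))
            = ∫⁻ p in (Ioo (0:ℝ) 1 ×ˢ (univ : Set ℝ)) ×ˢ Ico (0:ℝ) 1,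
              ((UnfoldAux.Phi k ⁻¹' N₁).indicator fun _ => (1:ℝ≥0∞)) p from by rw [hindeq]]
        rw [lintegral_indicator ((hPhimeas k) hN₁meas), setLIntegral_one,
          Measure.restrict_apply ((hPhimeas k) hN₁meas)]
      have hrhs : (∫⁻ z in Ico (0:ℝ) 1 ×ˢ (univ : Set ℝ),
          (N₁.indicator fun _ => (1:ℝ≥0∞)) z) = 0 := by
        rw [lintegral_indicator hN₁meas, setLIntegral_one, Measure.restrict_apply hN₁meas]
        exact measure_mono_null inter_subset_left hN₁null
      show (volume.restrict (OmegaU η)) (UnfoldAux.Phi k ⁻¹' N₁) = 0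
      rw [Measure.restrict_apply ((hPhimeas k) hN₁meas)]
      apply measure_mono_null (inter_subset_inter_right _ omegaU_sub_box)
      rw [← hlhs, hkey]
      exact hrhs
    have hae : (fun p => (unfold (1/(k:ℝ)) (extz (OmegaPlus η) u) p - u p.1)^2)
        =ᵐ[volume.restrict (OmegaU η)]
        (fun p => (w (UnfoldAux.Phi k p) - w p.1)^2) := by
      have h1 : ∀ᵐ p ∂(volume.restrict (OmegaU η)), p.1 ∉ N₁ := by
        apply ae_restrict_of_ae
        rw [ae_iff]
        simpa using hfst
      have h2 : ∀ᵐ p ∂(volume.restrict (OmegaU η)), UnfoldAux.Phi k p ∉ N₁ := by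
        rw [ae_iff]
        simpa using hpre
      have h3 : ∀ᵐ p ∂(volume.restrict (OmegaU η)), p ∈ OmegaU η := ae_restrict_mem hUm
      filter_upwards [h1, h2, h3] with p hp1 hp2 hp3
      have hw1 : u p.1 = w p.1 := by
        have hmem : p.1 ∈ OmegaPlus η := hp3.1
        rw [hwdef, indicator_of_mem hmem]
        exact hP p.1 hp1 hmem
      have hw2 : unfold (1/(k:ℝ)) (extz (OmegaPlus η) u) p = w (UnfoldAux.Phi k p) := by
        show extz (OmegaPlus η) u (UnfoldAux.Phi k p) = w (UnfoldAux.Phi k p)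
        rw [extz, hwdef]
        by_cases hq : UnfoldAux.Phi k p ∈ OmegaPlus η
        · rw [indicator_of_mem hq, indicator_of_mem hq]
          exact hP _ hp2 hq
        · rw [indicator_of_notMem hq, indicator_of_notMem hq]
      rw [hw1, hw2]
    rw [integral_congr_ae hae]
    have hFmeas : AEStronglyMeasurable
        (fun p : (ℝ × ℝ) × ℝ => (w (UnfoldAux.Phi k p) - w p.1)^2)
        (volume.restrict (OmegaU η)) :=
      (((hwmeas.comp (hPhimeas k)).sub (hwmeas.comp measurable_fst)).pow_const
        2).aestronglyMeasurable
    rw [integral_eq_lintegral_of_nonneg_ae (ae_of_all _ fun p => sq_nonneg _) hFmeas]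
  have htoReal : Tendsto (fun k => (J k).toReal) atTop (𝓝 0) := by
    have h := (ENNReal.tendsto_toReal (by norm_num : (0:ℝ≥0∞) ≠ ⊤)).comp hJ
    simpa [Function.comp_def] using h
  exact Tendsto.congr' (by filter_upwards [hstep1] with k hk using hk.symm) htoReal


end
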